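/- Let (X,d,W) be a complete UCW-hyperbolic space, C = C_1 ∪ ... ∪ C_p a finite union of nonempty closed convex subsets of X, and T:C→C a λ-firmly nonexpansive mapping for some λ ∈ (0,1). Then T has a fixed point if and only if T has bounded orbits. -/

import Mathlib

open Metric Set

/-- A geodesic segment in a metric space joining `x` and `y`: the image of an
isometric embedding of a real interval sending the endpoints to `x` and `y`. -/
def IsGeodesicSegment {X : Type*} [MetricSpace X] (S : Set X) (x y : X) : Prop :=
  ∃ (a b : ℝ) (γ : ℝ → X), a ≤ b ∧ γ a = x ∧ γ b = y ∧
    (∀ s ∈ Set.Icc a b, ∀ t ∈ Set.Icc a b, dist (γ s) (γ t) = |s - t|) ∧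
    S = γ '' Set.Icc a b

/-- A metric space is geodesic if every two points are joined by a geodesic segment. -/
def GeodesicSpace (X : Type*) [MetricSpace X] : Prop :=
  ∀ x y : X, ∃ S : Set X, IsGeodesicSegment S x y

/-- `(X,d,W)` is a W-hyperbolic space: the convexity mapping `W` satisfies
axioms (W1)-(W4) for all parameters in `[0,1]`. -/
def IsWHyperbolic {X : Type*} [MetricSpace X] (W : X → X → ℝ → X) : Prop :=
  (∀ x y z : X, ∀ l ∈ Set.Icc (0:ℝ) 1,
      dist z (W x y l) ≤ (1 - l) * dist z x + l * dist z y) ∧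
  (∀ x y : X, ∀ l ∈ Set.Icc (0:ℝ) 1, ∀ l' ∈ Set.Icc (0:ℝ) 1,
      dist (W x y l) (W x y l') = |l - l'| * dist x y) ∧
  (∀ x y : X, ∀ l ∈ Set.Icc (0:ℝ) 1, W x y l = W y x (1 - l)) ∧
  (∀ x y z w : X, ∀ l ∈ Set.Icc (0:ℝ) 1,
      dist (W x z l) (W y w l) ≤ (1 - l) * dist x y + l * dist z w)

/-- `η` is a monotone modulus of uniform convexity for `(X,d,W)`:
it witnesses uniform convexity and decreases in `r` for fixed `ε`. -/
def IsMonotoneModulus {X : Type*} [MetricSpace X] (W : X → X → ℝ → X)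
    (η : ℝ → ℝ → ℝ) : Prop :=
  (∀ r > (0:ℝ), ∀ ε ∈ Set.Ioc (0:ℝ) 2, η r ε ∈ Set.Ioc (0:ℝ) 1 ∧
    ∀ a x y : X, dist x a ≤ r → dist y a ≤ r → ε * r ≤ dist x y →
      dist (W x y (1/2)) a ≤ (1 - η r ε) * r) ∧
  (∀ ε ∈ Set.Ioc (0:ℝ) 2, ∀ r s : ℝ, 0 < r → r ≤ s → η s ε ≤ η r ε)

/-- A subset is convex if it contains the segments of its points. -/
def IsWConvex {X : Type*} [MetricSpace X] (W : X → X → ℝ → X) (C : Set X) : Prop :=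
  ∀ x ∈ C, ∀ y ∈ C, ∀ l ∈ Set.Icc (0:ℝ) 1, W x y l ∈ C

/-!
Firm nonexpansiveness implies nonexpansiveness, so a fixed point bounds every orbit.

Conversely, let `(xₙ)` be a bounded orbit. Uniform convexity makes the asymptotic radius
`y ↦ limsup d(y, xₙ)` have a unique minimizer on each closed convex piece `Cᵢ`, so it has a
global minimizer `z` on the finite union `C`. Since `T` does not increase the asymptotic radius,
the whole orbit of `z` consists of global minimizers; two of its points lie in a common piece,
hence coincide, and `T` has a periodic point. Along a periodic orbit of a `λ`-firmly nonexpansive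
map the distances `d(z, Tʲ z)` form a periodic sequence which is convex in `j`, hence constant,
so the periodic point is fixed.
-/

open Bornology Filter Function

section AsymptoticRadius

variable {X : Type*} [MetricSpace X] {x : ℕ → X}

-- Meaningful only for bounded `x`: the `limsup` of an unbounded real sequence is a junk value.
noncomputable def asymptoticRadius (x : ℕ → X) (y : X) : ℝ :=
  limsup (fun n => dist y (x n)) atTop

lemma isBoundedUnder_dist_of_isBounded_range (hx : IsBounded (range x)) (y : X) :
    IsBoundedUnder (· ≤ ·) atTop (fun n => dist y (x n)) := by
  obtain ⟨R, hR⟩ := hx.subset_closedBall y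
  exact isBoundedUnder_of ⟨R, fun n => by
    simpa only [mem_closedBall, dist_comm] using hR (mem_range_self n)⟩

lemma asymptoticRadius_le_of_eventually {y : X} {a : ℝ}
    (h : ∀ᶠ n in atTop, dist y (x n) ≤ a) : asymptoticRadius x y ≤ a :=
  limsup_le_of_le (isCoboundedUnder_le_of_le _ fun _ => dist_nonneg) h

lemma eventually_dist_lt_of_asymptoticRadius_lt (hx : IsBounded (range x)) {y : X} {a : ℝ}
    (h : asymptoticRadius x y < a) : ∀ᶠ n in atTop, dist y (x n) < a :=
  eventually_lt_of_limsup_lt h (isBoundedUnder_dist_of_isBounded_range hx y)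

lemma asymptoticRadius_nonneg (hx : IsBounded (range x)) (y : X) : 0 ≤ asymptoticRadius x y :=
  le_limsup_of_frequently_le (Frequently.of_forall fun _ => dist_nonneg)
    (isBoundedUnder_dist_of_isBounded_range hx y)

lemma asymptoticRadius_le_add_dist (hx : IsBounded (range x)) (y y' : X) :
    asymptoticRadius x y ≤ asymptoticRadius x y' + dist y y' := by
  refine le_iff_forall_pos_le_add.2 fun t ht => asymptoticRadius_le_of_eventually ?_
  filter_upwards [eventually_dist_lt_of_asymptoticRadius_lt hx (lt_add_of_pos_right _ ht)]
    with n hn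
  linarith [dist_triangle y y' (x n)]

lemma lipschitzWith_asymptoticRadius (hx : IsBounded (range x)) :
    LipschitzWith 1 (asymptoticRadius x) :=
  LipschitzWith.of_le_add (asymptoticRadius_le_add_dist hx)

lemma dist_le_asymptoticRadius_add (hx : IsBounded (range x)) (y y' : X) :
    dist y y' ≤ asymptoticRadius x y + asymptoticRadius x y' := by
  refine le_iff_forall_pos_le_add.2 fun t ht => ?_
  obtain ⟨n, hn, hn'⟩ :=
    ((eventually_dist_lt_of_asymptoticRadius_lt hx (lt_add_of_pos_right (asymptoticRadius x y)
      (half_pos ht))).and (eventually_dist_lt_of_asymptoticRadius_lt hx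
        (lt_add_of_pos_right (asymptoticRadius x y') (half_pos ht)))).exists
  linarith [dist_triangle_right y y' (x n)]

lemma asymptoticRadius_le_of_dist_succ_le (hx : IsBounded (range x)) {y y' : X}
    (h : ∀ n, dist y' (x (n + 1)) ≤ dist y (x n)) :
    asymptoticRadius x y' ≤ asymptoticRadius x y := by
  rw [asymptoticRadius, ← limsup_nat_add _ 1]
  exact limsup_le_limsup (Eventually.of_forall h) (isCoboundedUnder_le_of_le _ fun _ => dist_nonneg)
    (isBoundedUnder_dist_of_isBounded_range hx y)

end AsymptoticRadius

section UniformConvexity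

variable {X : Type*} [MetricSpace X] {W : X → X → ℝ → X} {η : ℝ → ℝ → ℝ} {x : ℕ → X}

lemma asymptoticRadius_midpoint_le (hη : IsMonotoneModulus W η) (hx : IsBounded (range x))
    {u v : X} {r ε : ℝ} (hr : 0 < r) (hε : ε ∈ Ioc 0 2) (hu : asymptoticRadius x u < r)
    (hv : asymptoticRadius x v < r) (huv : ε * r ≤ dist u v) :
    asymptoticRadius x (W u v (1 / 2)) ≤ (1 - η r ε) * r := by
  refine asymptoticRadius_le_of_eventually ?_
  filter_upwards [eventually_dist_lt_of_asymptoticRadius_lt hx hu,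
    eventually_dist_lt_of_asymptoticRadius_lt hx hv] with n hun hvn
  exact (hη.1 r hr ε hε).2 (x n) u v hun.le hvn.le huv

lemma exists_pos_dist_lt_of_asymptoticRadius_lt (hη : IsMonotoneModulus W η) (hx : IsBounded (range x))
    {K : Set X} (hK : IsWConvex W K) {ρ : ℝ} (hρ : ∀ w ∈ K, ρ ≤ asymptoticRadius x w)
    {ε : ℝ} (hε : 0 < ε) :
    ∃ θ > 0, ∀ u ∈ K, ∀ v ∈ K, asymptoticRadius x u < ρ + θ → asymptoticRadius x v < ρ + θ →
      dist u v < ε := by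
  rcases le_or_gt ρ (ε / 4) with hρε | hρε
  · refine ⟨ε / 4, by positivity, fun u _ v _ hu hv => ?_⟩
    linarith [dist_le_asymptoticRadius_add hx u v]
  have hρ0 : 0 < ρ := by linarith
  set R := ρ + 1
  set ε₀ := min (ε / R) 2
  have hε₀ : ε₀ ∈ Ioc 0 2 := ⟨lt_min (by positivity) two_pos, min_le_right _ _⟩
  have hη₀ : 0 < η R ε₀ := ((hη.1 R (by positivity) ε₀ hε₀).1).1
  set θ := min (η R ε₀ * ρ / 2) 1
  have hθ : 0 < θ := by positivity
  refine ⟨θ, hθ, fun u hu v hv huθ hvθ => ?_⟩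
  by_contra! huv
  have hr : 0 < ρ + θ := by positivity
  have hrR : ρ + θ ≤ R := by linarith [min_le_right (η R ε₀ * ρ / 2) 1]
  have hε₀r : ε₀ * (ρ + θ) ≤ dist u v :=
    calc ε₀ * (ρ + θ) ≤ ε / R * R := by gcongr; exact min_le_left _ _
      _ = ε := div_mul_cancel₀ ε (by positivity)
      _ ≤ dist u v := huv
  have hmid := asymptoticRadius_midpoint_le hη hx hr hε₀ huθ hvθ hε₀r
  have hmono : η R ε₀ ≤ η (ρ + θ) ε₀ := hη.2 ε₀ hε₀ _ _ hr hrR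
  have hρmid := hρ _ (hK u hu v hv (1 / 2) ⟨by norm_num, by norm_num⟩)
  -- `ρ ≤ (1 - η R ε₀) (ρ + θ)` forces `η R ε₀ * ρ ≤ θ`, against the choice of `θ`
  nlinarith [mul_le_mul_of_nonneg_right hmono hr.le, mul_pos hη₀ hρ0, mul_pos hη₀ hθ,
    min_le_left (η R ε₀ * ρ / 2) 1]

lemma eq_of_asymptoticRadius_le (hη : IsMonotoneModulus W η) (hx : IsBounded (range x))
    {K : Set X} (hK : IsWConvex W K) {ρ : ℝ} (hρ : ∀ w ∈ K, ρ ≤ asymptoticRadius x w)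
    {u v : X} (hu : u ∈ K) (hv : v ∈ K) (hu' : asymptoticRadius x u ≤ ρ)
    (hv' : asymptoticRadius x v ≤ ρ) : u = v :=
  eq_of_forall_dist_le fun ε hε => by
    obtain ⟨θ, hθ, h⟩ := exists_pos_dist_lt_of_asymptoticRadius_lt hη hx hK hρ hε
    exact (h u hu v hv (by linarith) (by linarith)).le

lemma exists_isMinOn_asymptoticRadius [CompleteSpace X] (hη : IsMonotoneModulus W η)
    (hx : IsBounded (range x)) {K : Set X} (hne : K.Nonempty) (hcl : IsClosed K)
    (hK : IsWConvex W K) : ∃ z ∈ K, IsMinOn (asymptoticRadius x) K z := by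
  set ρ := sInf (asymptoticRadius x '' K)
  have hbdd : BddBelow (asymptoticRadius x '' K) :=
    ⟨0, forall_mem_image.2 fun y _ => asymptoticRadius_nonneg hx y⟩
  have hρ : ∀ w ∈ K, ρ ≤ asymptoticRadius x w := fun w hw => csInf_le hbdd (mem_image_of_mem _ hw)
  obtain ⟨s, -, hs, hsK⟩ := exists_seq_tendsto_sInf (hne.image _) hbdd
  choose y hyK hys using hsK
  have hcauchy : CauchySeq y := by
    refine Metric.cauchySeq_iff.2 fun ε hε => ?_
    obtain ⟨θ, hθ, h⟩ := exists_pos_dist_lt_of_asymptoticRadius_lt hη hx hK hρ hε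
    obtain ⟨N, hN⟩ := eventually_atTop.1 ((tendsto_order.1 hs).2 (ρ + θ) (by linarith))
    exact ⟨N, fun m hm n hn => h _ (hyK m) _ (hyK n) ((hys m).symm ▸ hN m hm)
      ((hys n).symm ▸ hN n hn)⟩
  obtain ⟨z, hz⟩ := cauchySeq_tendsto_of_complete hcauchy
  have hzρ : asymptoticRadius x z = ρ :=
    tendsto_nhds_unique (((lipschitzWith_asymptoticRadius hx).continuous.tendsto z).comp hz)
      (by simpa only [comp_def, hys] using hs)
  exact ⟨z, hcl.mem_of_tendsto hz (Eventually.of_forall hyK),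
    isMinOn_iff.2 fun w hw => hzρ ▸ hρ w hw⟩

end UniformConvexity

lemma Function.Periodic.eq_apply_zero_of_antitone {α : Type*} [PartialOrder α] {f : ℕ → α}
    {m : ℕ} (hf : Periodic f m) (hm : 0 < m) (hanti : Antitone f) (n : ℕ) : f n = f 0 :=
  le_antisymm (hanti (Nat.zero_le n)) <|
    calc f 0 = f (n * m) := by simpa using (hf.nat_mul_eq n).symm
      _ ≤ f n := hanti (Nat.le_mul_of_pos_right n hm)

lemma Function.Periodic.eq_apply_zero_of_two_mul_le_add {a : ℕ → ℝ} {m : ℕ} (ha : Periodic a m)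
    (hm : 0 < m) (hconv : ∀ j, 2 * a (j + 1) ≤ a j + a (j + 2)) (n : ℕ) : a n = a 0 := by
  set e : ℕ → ℝ := fun j => a j - a (j + 1)
  have he : ∀ j, e j = e 0 := by
    refine Periodic.eq_apply_zero_of_antitone (fun j => ?_) hm
      (antitone_nat_of_succ_le fun j => by linarith [hconv j])
    simp only [e, ha j, add_right_comm j m 1, ha (j + 1)]
  have hlin : ∀ n : ℕ, a n = a 0 - n * e 0 := by
    intro n
    induction n with
    | zero => simp
    | succ n ih =>
      have hstep := he n
      simp only [e] at hstep ⊢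
      push_cast
      linarith
  have he0 : e 0 = 0 := by
    have := hlin m
    rw [ha.eq] at this
    have hme : (m : ℝ) * e 0 = 0 := by linarith
    exact (mul_eq_zero.1 hme).resolve_left (by exact_mod_cast hm.ne')
  rw [hlin n, he0, mul_zero, sub_zero]

section FirmlyNonexpansive

variable {X : Type*} [MetricSpace X] {W : X → X → ℝ → X}

lemma IsWHyperbolic.dist_W_W_le (hW : IsWHyperbolic W) {l : ℝ} (hl : l ∈ Icc (0 : ℝ) 1)
    (x x' y y' : X) :
    dist (W x x' l) (W y y' l) ≤ (1 - l) * ((1 - l) * dist x y + l * dist x' y) +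
      l * ((1 - l) * dist x y' + l * dist x' y') := by
  have hy := hW.1 x x' y l hl
  have hy' := hW.1 x x' y' l hl
  rw [dist_comm y x, dist_comm y x', dist_comm y] at hy
  rw [dist_comm y' x, dist_comm y' x', dist_comm y'] at hy'
  calc dist (W x x' l) (W y y' l)
      ≤ (1 - l) * dist (W x x' l) y + l * dist (W x x' l) y' := hW.1 y y' _ l hl
    _ ≤ _ := by gcongr <;> linarith [hl.1, hl.2]

def IsFirmlyNonexpansiveOn (W : X → X → ℝ → X) (l : ℝ) (T : X → X) (C : Set X) : Prop :=
  ∀ x ∈ C, ∀ y ∈ C, dist (T x) (T y) ≤ dist (W x (T x) l) (W y (T y) l)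

variable {l : ℝ} {T : X → X} {C : Set X}

lemma IsFirmlyNonexpansiveOn.dist_le (hW : IsWHyperbolic W) (hl : l ∈ Ico (0 : ℝ) 1)
    (hT : IsFirmlyNonexpansiveOn W l T C) : ∀ x ∈ C, ∀ y ∈ C, dist (T x) (T y) ≤ dist x y := by
  intro x hx y hy
  have h := (hT x hx y hy).trans (hW.2.2.2 x y (T x) (T y) l ⟨hl.1, hl.2.le⟩)
  have h' : (1 - l) * dist (T x) (T y) ≤ (1 - l) * dist x y := by linarith
  exact le_of_mul_le_mul_left h' (by linarith [hl.2])

lemma IsFirmlyNonexpansiveOn.isFixedPt_of_isPeriodicPt (hW : IsWHyperbolic W)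
    (hl : l ∈ Ioo (0 : ℝ) 1) (hT : IsFirmlyNonexpansiveOn W l T C) (hTC : MapsTo T C C)
    {z : X} (hz : z ∈ C) {m : ℕ} (hm : 0 < m) (hper : IsPeriodicPt T m z) : IsFixedPt T z := by
  have hne := hT.dist_le hW (Ioo_subset_Ico_self hl)
  have horbit : ∀ i, T^[i] z ∈ C := fun i => hTC.iterate i hz
  have hzper : Periodic (fun i => T^[i] z) m := fun i => by
    simp only [iterate_add_apply, hper.eq]
  set a : ℕ → ℝ := fun j => dist z (T^[j] z)
  have hshift : ∀ i j, dist (T^[i] z) (T^[j + i] z) = a j := fun i j =>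
    Periodic.eq_apply_zero_of_antitone (f := fun i => dist (T^[i] z) (T^[j + i] z))
      (fun i => by simp only [← add_assoc, hzper _]) hm
      (antitone_nat_of_succ_le fun i => by
        simp only [← add_assoc, iterate_succ_apply']
        exact hne _ (horbit _) _ (horbit _)) i
  have hconv : ∀ j, 2 * a (j + 1) ≤ a j + a (j + 2) := by
    intro j
    have hfirm : dist (T^[1] z) (T^[j + 2] z) ≤
        dist (W (T^[0] z) (T^[1] z) l) (W (T^[j + 1] z) (T^[j + 2] z) l) := by
      have h := hT _ hz _ (horbit (j + 1))
      rwa [← iterate_succ_apply' T (j + 1) z] at h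
    have h := hfirm.trans (hW.dist_W_W_le (Ioo_subset_Icc_self hl) _ _ _ _)
    have e₀₁ : dist (T^[0] z) (T^[j + 1] z) = a (j + 1) := hshift 0 (j + 1)
    have e₀₂ : dist (T^[0] z) (T^[j + 2] z) = a (j + 2) := hshift 0 (j + 2)
    have e₁₁ : dist (T^[1] z) (T^[j + 1] z) = a j := hshift 1 j
    have e₁₂ : dist (T^[1] z) (T^[j + 2] z) = a (j + 1) := hshift 1 (j + 1)
    rw [e₀₁, e₀₂, e₁₁, e₁₂] at h
    have hl' : 0 < l * (1 - l) := mul_pos hl.1 (by linarith [hl.2])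
    refine le_of_mul_le_mul_left ?_ hl'
    linear_combination h
  have ha : Periodic a m := fun j => by simp only [a, hzper j]
  have h1 := ha.eq_apply_zero_of_two_mul_le_add hm hconv 1
  simpa [a, IsFixedPt, eq_comm] using h1

end FirmlyNonexpansive

lemma exists_lt_mem_of_forall_mem_iUnion {X ι : Type*} [Finite ι] {K : ι → Set X} {f : ℕ → X}
    (hf : ∀ n, f n ∈ ⋃ i, K i) : ∃ i, ∃ m n, m < n ∧ f m ∈ K i ∧ f n ∈ K i := by
  choose g hg using fun n => mem_iUnion.1 (hf n)
  obtain ⟨m, n, hmn, hg_eq⟩ := Finite.exists_ne_map_eq_of_infinite g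
  rcases hmn.lt_or_gt with h | h
  · exact ⟨g m, m, n, h, hg m, hg_eq ▸ hg n⟩
  · exact ⟨g m, n, m, h, hg_eq ▸ hg n, hg m⟩

lemma exists_isMinOn_iUnion {X ι β : Type*} [Finite ι] [Nonempty ι] [LinearOrder β]
    {f : X → β} {K : ι → Set X} (h : ∀ i, ∃ z ∈ K i, IsMinOn f (K i) z) :
    ∃ z ∈ ⋃ i, K i, IsMinOn f (⋃ i, K i) z := by
  choose z hzK hz using h
  obtain ⟨i₀, hi₀⟩ := Finite.exists_min fun i => f (z i)
  refine ⟨z i₀, mem_iUnion_of_mem i₀ (hzK i₀), isMinOn_iff.2 fun w hw => ?_⟩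
  obtain ⟨i, hwi⟩ := mem_iUnion.1 hw
  exact (hi₀ i).trans (isMinOn_iff.1 (hz i) w hwi)

section FixedPoints

variable {X : Type*} [MetricSpace X] {T : X → X} {C : Set X}

lemma isBounded_range_iterate_of_isFixedPt (hne : ∀ x ∈ C, ∀ y ∈ C, dist (T x) (T y) ≤ dist x y)
    (hTC : MapsTo T C C) {x₀ : X} (hx₀ : x₀ ∈ C) (hfix : IsFixedPt T x₀) {x : X} (hx : x ∈ C) :
    IsBounded (range fun n => T^[n] x) := by
  refine (isBounded_closedBall (x := x₀) (r := dist x x₀)).subset (range_subset_iff.2 fun n => mem_closedBall.2 ?_)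
  induction n with
  | zero => exact le_rfl
  | succ n ih =>
    calc dist (T^[n + 1] x) x₀ = dist (T (T^[n] x)) (T x₀) := by rw [iterate_succ_apply', hfix.eq]
      _ ≤ dist (T^[n] x) x₀ := hne _ (hTC.iterate n hx) _ hx₀
      _ ≤ dist x x₀ := ih

lemma exists_isPeriodicPt_of_isBounded_orbit [CompleteSpace X] {W : X → X → ℝ → X}
    {η : ℝ → ℝ → ℝ} (hη : IsMonotoneModulus W η) {ι : Type*} [Finite ι] {K : ι → Set X}
    (hK : ∀ i, (K i).Nonempty ∧ IsClosed (K i) ∧ IsWConvex W (K i))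
    (hne : ∀ x ∈ ⋃ i, K i, ∀ y ∈ ⋃ i, K i, dist (T x) (T y) ≤ dist x y)
    (hTC : MapsTo T (⋃ i, K i) (⋃ i, K i)) {x₀ : X} (hx₀ : x₀ ∈ ⋃ i, K i)
    (hbdd : IsBounded (range fun n => T^[n] x₀)) :
    ∃ z ∈ ⋃ i, K i, ∃ m, 0 < m ∧ IsPeriodicPt T m z := by
  set φ := asymptoticRadius fun n => T^[n] x₀
  have hφT : ∀ y ∈ ⋃ i, K i, φ (T y) ≤ φ y := fun y hy =>
    asymptoticRadius_le_of_dist_succ_le hbdd fun n => by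
      simpa only [iterate_succ_apply'] using hne y hy _ (hTC.iterate n hx₀)
  have : Nonempty ι := (mem_iUnion.1 hx₀).nonempty
  obtain ⟨z, hz, hmin⟩ := exists_isMinOn_iUnion fun i =>
    exists_isMinOn_asymptoticRadius hη hbdd (hK i).1 (hK i).2.1 (hK i).2.2
  have horbit : ∀ n, T^[n] z ∈ ⋃ i, K i ∧ φ (T^[n] z) ≤ φ z := by
    intro n
    induction n with
    | zero => exact ⟨hz, le_rfl⟩
    | succ n ih =>
      rw [iterate_succ_apply']
      exact ⟨hTC ih.1, (hφT _ ih.1).trans ih.2⟩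
  obtain ⟨i, m, n, hmn, hm, hn⟩ := exists_lt_mem_of_forall_mem_iUnion fun n => (horbit n).1
  have heq : T^[m] z = T^[n] z :=
    eq_of_asymptoticRadius_le hη hbdd (hK i).2.2
      (fun w hw => isMinOn_iff.1 hmin w (mem_iUnion_of_mem i hw)) hm hn (horbit m).2 (horbit n).2
  refine ⟨T^[m] z, (horbit m).1, n - m, by omega, ?_⟩
  rw [IsPeriodicPt, IsFixedPt, ← iterate_add_apply, Nat.sub_add_cancel hmn.le, heq]

end FixedPoints

theorem stmt15 {X : Type*} [MetricSpace X] [CompleteSpace X]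
    (W : X → X → ℝ → X) (hW : IsWHyperbolic W)
    (η : ℝ → ℝ → ℝ) (hη : IsMonotoneModulus W η)
    (p : ℕ) (hp : 1 ≤ p) (Cs : Fin p → Set X)
    (hCs : ∀ k, (Cs k).Nonempty ∧ IsClosed (Cs k) ∧ IsWConvex W (Cs k))
    (C : Set X) (hC : C = ⋃ k, Cs k)
    (T : X → X) (hTC : Set.MapsTo T C C)
    (l : ℝ) (hl : l ∈ Set.Ioo (0:ℝ) 1)
    (hT : ∀ x ∈ C, ∀ y ∈ C, dist (T x) (T y) ≤ dist (W x (T x) l) (W y (T y) l)) :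
    (∃ x ∈ C, T x = x) ↔
      ∀ x ∈ C, Bornology.IsBounded (Set.range fun n : ℕ => T^[n] x) := by
  have hne := IsFirmlyNonexpansiveOn.dist_le hW (Ioo_subset_Ico_self hl) hT
  refine ⟨fun ⟨x₀, hx₀, hfix⟩ x hx => isBounded_range_iterate_of_isFixedPt hne hTC hx₀ hfix hx,
    fun hbdd => ?_⟩
  obtain ⟨x₀, hx₀⟩ := (hCs ⟨0, hp⟩).1
  subst hC
  have hx₀C : x₀ ∈ ⋃ k, Cs k := mem_iUnion_of_mem _ hx₀
  obtain ⟨z, hz, m, hm, hper⟩ :=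
    exists_isPeriodicPt_of_isBounded_orbit hη hCs hne hTC hx₀C (hbdd x₀ hx₀C)
  exact ⟨z, hz, IsFirmlyNonexpansiveOn.isFixedPt_of_isPeriodicPt hW hl hT hTC hz hm hper⟩
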